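/- arXiv:2407.14435 — 5 statements merged into one kernel-verified Lean document; each statement's English description precedes it below -/
import Mathlib

section
/- Let (Ω, P) be a probability space, X : Ω → ℝⁿ a random vector, g : ℝⁿ → ℝ a Borel measurable function, and f : ℝⁿ → ℝ a Borel measurable function with f(X) integrable. Define A(y) := E[f(X)·1{g(X) > y}]. Suppose there exists a Lebesgue-integrable function h : ℝ → ℝ such that for every Borel set S ⊆ ℝ one has E[f(X)·1{g(X) ∈ S}] = ∫_S h(t) dt, and suppose h is continuous at a point y₀ ∈ ℝ. Then A is differentiable at y₀ with A′(y₀) = −h(y₀). -/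
open MeasureTheory

/-- Differentiating an expectation involving a Heaviside step function:
if `A y = E[f(X)·1{g(X) > y}]` and the "signed law" of `g(X)` weighted by `f(X)`
has Lebesgue density `h` which is continuous at `y₀`, then `A` is differentiable
at `y₀` with derivative `-h y₀`. -/
theorem stmt_0 {n : ℕ} {Ω : Type*} [MeasurableSpace Ω]
    (P : Measure Ω) [IsProbabilityMeasure P]
    (X : Ω → EuclideanSpace ℝ (Fin n)) (hX : Measurable X)
    (g : EuclideanSpace ℝ (Fin n) → ℝ) (hg : Measurable g)
    (f : EuclideanSpace ℝ (Fin n) → ℝ) (hf : Measurable f)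
    (hfX : Integrable (fun ω => f (X ω)) P)
    (A : ℝ → ℝ)
    (hA : ∀ y : ℝ, A y = ∫ ω, f (X ω) * (if y < g (X ω) then (1 : ℝ) else 0) ∂P)
    (h : ℝ → ℝ) (hh : Integrable h)
    (hrep : ∀ S : Set ℝ, MeasurableSet S →
      ∫ ω, f (X ω) * S.indicator (fun _ => (1 : ℝ)) (g (X ω)) ∂P = ∫ t in S, h t)
    (y₀ : ℝ) (hcont : ContinuousAt h y₀) :
    HasDerivAt A (-h y₀) y₀ := by
  have key : ∀ y : ℝ, A y = ∫ t in Set.Ioi y, h t := by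
    intro y
    rw [hA y, ← hrep (Set.Ioi y) measurableSet_Ioi]
    simp [Set.indicator_apply]
  have hIic : ∀ y : ℝ, ∫ t in Set.Ioi y, h t = (∫ t, h t) - ∫ t in Set.Iic y, h t := by
    intro y
    have := MeasureTheory.integral_add_compl (measurableSet_Iic (a := y)) hh
    rw [Set.compl_Iic] at this
    linarith
  have key2 : ∀ y : ℝ, A y = A y₀ - ∫ t in y₀..y, h t := by
    intro y
    have := intervalIntegral.integral_Iic_sub_Iic (hh.integrableOn (s := Set.Iic y₀))
      (hh.integrableOn (s := Set.Iic y))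
    rw [key y, key y₀, hIic y, hIic y₀]
    linarith
  have hd : HasDerivAt (fun y => A y₀ - ∫ t in y₀..y, h t) (-h y₀) y₀ := by
    have := (intervalIntegral.integral_hasDerivAt_right (a := y₀)
      hh.intervalIntegrable
      hh.aestronglyMeasurable.stronglyMeasurableAtFilter hcont)
    simpa using this.const_sub (A y₀)
  exact hd.congr_of_eventuallyEq (Filter.Eventually.of_forall key2)
end

section
/- Fix n, M ∈ ℕ, an M×n real matrix W_enc, b_enc ∈ ℝ^M, vectors d_1,…,d_M ∈ ℝⁿ, b_dec ∈ ℝⁿ, λ > 0, an index i ∈ {1,…,M}, and thresholds θ_j ∈ ℝ for j ≠ i. For x ∈ ℝⁿ set π(x) = W_enc x + b_enc, u_i(x) := x − b_dec − Σ_{j≠i} π_j(x)·1{π_j(x) > θ_j}·d_j, and φ_i(x) := π_i(x)²·‖d_i‖₂² − 2·π_i(x)·⟨d_i, u_i(x)⟩. Let X : Ω → ℝⁿ be a random vector on a probability space (Ω, P). For t ∈ ℝ let F(t) := E[‖X − b_dec − Σ_{j≠i} π_j(X)·1{π_j(X) > θ_j}·d_j − π_i(X)·1{π_i(X) > t}·d_i‖₂²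 + λ·(Σ_{j≠i} 1{π_j(X) > θ_j} + 1{π_i(X) > t})], assumed finite for all t. Suppose φ_i(X) is integrable and there exists a Lebesgue-integrable h : ℝ → ℝ such that for every Borel set S ⊆ ℝ, E[(λ + φ_i(X))·1{π_i(X) ∈ S}] = ∫_S h(t) dt, with h continuous at t₀. Then F is differentiable at t₀ with F′(t₀) = −h(t₀). -/
open MeasureTheory Finset

/-- The expected JumpReLU SAE loss, as a function of the single threshold `θ i = t`,
is differentiable at `t₀` with derivative `-h t₀`, where `h` is the Lebesgue density of
the signed measure `S ↦ E[(λ + φ_i(X))·1{π_i(X) ∈ S}]`, assumed continuous at `t₀`. -/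
theorem stmt_3 {n M : ℕ}
    (Wenc : Matrix (Fin M) (Fin n) ℝ) (benc : Fin M → ℝ)
    (d : Fin M → EuclideanSpace ℝ (Fin n)) (bdec : EuclideanSpace ℝ (Fin n))
    (lam : ℝ) (hlam : 0 < lam) (i : Fin M) (θ : Fin M → ℝ)
    {Ω : Type*} [MeasurableSpace Ω] (P : Measure Ω) [IsProbabilityMeasure P]
    (X : Ω → EuclideanSpace ℝ (Fin n)) (hX : Measurable X)
    (π : EuclideanSpace ℝ (Fin n) → Fin M → ℝ)
    (hπ : ∀ x j, π x j = (∑ k, Wenc j k * x k) + benc j)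
    (u : EuclideanSpace ℝ (Fin n) → EuclideanSpace ℝ (Fin n))
    (hu : ∀ x, u x = x - bdec
        - ∑ j ∈ Finset.univ.erase i, (π x j * (if θ j < π x j then (1 : ℝ) else 0)) • d j)
    (φ : EuclideanSpace ℝ (Fin n) → ℝ)
    (hφ : ∀ x, φ x = (π x i) ^ 2 * ‖d i‖ ^ 2 - 2 * π x i * (inner ℝ (d i) (u x) : ℝ))
    (F : ℝ → ℝ)
    (hF : ∀ t : ℝ, F t = ∫ ω,
        (‖X ω - bdec
            - (∑ j ∈ Finset.univ.erase i,
                (π (X ω) j * (if θ j < π (X ω) j then (1 : ℝ) else 0)) • d j)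
            - (π (X ω) i * (if t < π (X ω) i then (1 : ℝ) else 0)) • d i‖ ^ 2
          + lam * ((∑ j ∈ Finset.univ.erase i,
                (if θ j < π (X ω) j then (1 : ℝ) else 0))
              + (if t < π (X ω) i then (1 : ℝ) else 0))) ∂P)
    (hFint : ∀ t : ℝ, Integrable (fun ω =>
        ‖X ω - bdec
            - (∑ j ∈ Finset.univ.erase i,
                (π (X ω) j * (if θ j < π (X ω) j then (1 : ℝ) else 0)) • d j)
            - (π (X ω) i * (if t < π (X ω) i then (1 : ℝ) else 0)) • d i‖ ^ 2
          + lam * ((∑ j ∈ Finset.univ.erase i,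
                (if θ j < π (X ω) j then (1 : ℝ) else 0))
              + (if t < π (X ω) i then (1 : ℝ) else 0))) P)
    (hφint : Integrable (fun ω => φ (X ω)) P)
    (h : ℝ → ℝ) (hh : Integrable h)
    (hrep : ∀ S : Set ℝ, MeasurableSet S →
      ∫ ω, (lam + φ (X ω)) * S.indicator (fun _ => (1 : ℝ)) (π (X ω) i) ∂P
        = ∫ t in S, h t)
    (t₀ : ℝ) (hcont : ContinuousAt h t₀) :
    HasDerivAt F (-h t₀) t₀ := by
  classical
  -- abbreviations
  set e : ℝ → Ω → ℝ := fun t ω => if t < π (X ω) i then (1 : ℝ) else 0 with he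
  set g : Ω → ℝ := fun ω => lam + φ (X ω) with hg
  set base : Ω → ℝ := fun ω => ‖u (X ω)‖ ^ 2
      + lam * (∑ j ∈ Finset.univ.erase i, (if θ j < π (X ω) j then (1 : ℝ) else 0)) with hbase
  -- pointwise algebraic identity
  have key : ∀ (t : ℝ) (ω : Ω),
      (‖X ω - bdec
          - (∑ j ∈ Finset.univ.erase i,
              (π (X ω) j * (if θ j < π (X ω) j then (1 : ℝ) else 0)) • d j)
          - (π (X ω) i * (if t < π (X ω) i then (1 : ℝ) else 0)) • d i‖ ^ 2
        + lam * ((∑ j ∈ Finset.univ.erase i,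
              (if θ j < π (X ω) j then (1 : ℝ) else 0))
            + (if t < π (X ω) i then (1 : ℝ) else 0)))
      = base ω + g ω * e t ω := by
    intro t ω
    have hux : X ω - bdec
        - (∑ j ∈ Finset.univ.erase i,
            (π (X ω) j * (if θ j < π (X ω) j then (1 : ℝ) else 0)) • d j) = u (X ω) :=
      (hu (X ω)).symm
    simp only [hux, hbase, hg, he]
    rw [hφ]
    by_cases hlt : t < π (X ω) i
    · simp only [if_pos hlt, mul_one]
      have hexp : ‖u (X ω) - (π (X ω) i) • d i‖ ^ 2
          = ‖u (X ω)‖ ^ 2 - 2 * (inner ℝ (u (X ω)) ((π (X ω) i) • d i) : ℝ)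
            + ‖(π (X ω) i) • d i‖ ^ 2 := norm_sub_sq_real _ _
      rw [hexp, real_inner_smul_right, norm_smul]
      simp only [Real.norm_eq_abs]
      rw [mul_pow, sq_abs, real_inner_comm (u (X ω)) (d i)]
      ring
    · simp only [if_neg hlt, mul_zero, zero_smul, sub_zero, add_zero]
      try ring
  -- measurability of ω ↦ π (X ω) i
  have hπmeas : Measurable fun ω => π (X ω) i := by
    have : (fun ω => π (X ω) i) = fun ω => (∑ k, Wenc i k * X ω k) + benc i :=
      funext fun ω => hπ (X ω) i
    rw [this]
    exact (Finset.measurable_sum _ fun k _ =>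
      (measurable_const.mul ((measurable_pi_apply k).comp ((WithLp.measurable_ofLp 2 _).comp hX)))).add measurable_const
  have hgint : Integrable g P := (integrable_const lam).add hφint
  have heint : ∀ t, Integrable (fun ω => g ω * e t ω) P := by
    intro t
    have : Integrable (fun ω => e t ω * g ω) P := by
      refine hgint.bdd_mul (c := 1) ?_ (Filter.Eventually.of_forall fun ω => ?_)
      · exact (Measurable.ite (measurableSet_lt measurable_const hπmeas)
          measurable_const measurable_const).aestronglyMeasurable
      · simp only [he]
        split <;> simp
    simpa [mul_comm] using this
  -- base is integrable
  have hbaseint : Integrable base P := by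
    have h1 := hFint t₀
    simp only [key t₀] at h1
    have h2 := h1.sub (heint t₀)
    have h3 : base = (fun ω => base ω + g ω * e t₀ ω) - fun ω => g ω * e t₀ ω := by
      funext ω; simp
    rw [h3]; exact h2
  -- F t = ∫ base + ∫_{Ioi t} h
  have hFt : ∀ t, F t = (∫ ω, base ω ∂P) + ∫ s in Set.Ioi t, h s := by
    intro t
    rw [hF t]
    simp only [key t]
    rw [integral_add hbaseint (heint t)]
    congr 1
    have hfun : (fun ω => g ω * e t ω)
        = fun ω => (lam + φ (X ω)) * (Set.Ioi t).indicator (fun _ => (1 : ℝ)) (π (X ω) i) := by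
      funext ω
      rw [Set.indicator_apply]
      simp only [he, hg, Set.mem_Ioi]
    rw [hfun, hrep (Set.Ioi t) measurableSet_Ioi]
  have hIoi : ∀ t, ∫ s in Set.Ioi t, h s = (∫ s, h s) - ∫ s in Set.Iic t, h s := by
    intro t
    have := integral_add_compl (measurableSet_Iic (a := t)) hh
    rw [Set.compl_Iic] at this
    linarith
  have hFform : F = fun t => F t₀ - ∫ s in t₀..t, h s := by
    funext t
    rw [hFt t, hFt t₀, hIoi t, hIoi t₀,
      ← intervalIntegral.integral_Iic_sub_Iic hh.integrableOn hh.integrableOn]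
    ring
  have hd : HasDerivAt (fun t => ∫ s in t₀..t, h s) (h t₀) t₀ :=
    intervalIntegral.integral_hasDerivAt_right hh.intervalIntegrable
      ⟨Set.univ, Filter.univ_mem, hh.aestronglyMeasurable.restrict⟩ hcont
  rw [hFform]
  exact hd.const_sub (F t₀)
end

section
/- Let (Ω, P) be a probability space, X : Ω → ℝⁿ a random vector, g : ℝⁿ → ℝ Borel measurable, and f : ℝⁿ → ℝ Borel measurable with f(X) integrable. Let K : ℝ → ℝ be Borel measurable, bounded, and symmetric (K(−z) = K(z) for all z), and let ε > 0, θ ∈ ℝ. Suppose there exists a Lebesgue-integrable h : ℝ → ℝ such that for every Borel set S ⊆ ℝ, E[f(X)·1{g(X) ∈ S}] = ∫_S h(t) dt. Then E[(1/ε)·f(X)·K((g(X) − θ)/ε)] = ∫_ℝ h(t)·(1/ε)·K((θ − t)/ε) dt. -/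
open MeasureTheory
open scoped NNReal ENNReal

/-- The expectation of the STE pseudo-gradient term equals the kernel-smoothed
version of the density `h` of the signed measure `S ↦ E[f(X)·1{g(X) ∈ S}]`. -/
theorem stmt_8 {n : ℕ} {Ω : Type*} [MeasurableSpace Ω]
    (P : Measure Ω) [IsProbabilityMeasure P]
    (X : Ω → EuclideanSpace ℝ (Fin n)) (hX : Measurable X)
    (g : EuclideanSpace ℝ (Fin n) → ℝ) (hg : Measurable g)
    (f : EuclideanSpace ℝ (Fin n) → ℝ) (hf : Measurable f)
    (hfX : Integrable (fun ω => f (X ω)) P)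
    (K : ℝ → ℝ) (hK : Measurable K) (C : ℝ) (hKbd : ∀ z, |K z| ≤ C)
    (hKsymm : ∀ z : ℝ, K (-z) = K z)
    (ε : ℝ) (hε : 0 < ε) (θ : ℝ)
    (h : ℝ → ℝ) (hh : Integrable h)
    (hrep : ∀ S : Set ℝ, MeasurableSet S →
      ∫ ω, f (X ω) * S.indicator (fun _ => (1 : ℝ)) (g (X ω)) ∂P = ∫ t in S, h t) :
    ∫ ω, (1 / ε) * f (X ω) * K ((g (X ω) - θ) / ε) ∂P
      = ∫ t, h t * ((1 / ε) * K ((θ - t) / ε)) := by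
  have hC : 0 ≤ C := le_trans (abs_nonneg _) (hKbd 0)
  set φ : ℝ → ℝ := fun t => (1 / ε) * K ((θ - t) / ε) with hφdef
  have hφmeas : Measurable φ :=
    (hK.comp ((measurable_const.sub measurable_id).div_const ε)).const_mul _
  have hφbd : ∀ t, ‖φ t‖ ≤ (1 / ε) * C := by
    intro t
    rw [hφdef]
    rw [norm_mul, Real.norm_eq_abs, Real.norm_eq_abs,
      abs_of_pos (by positivity : (0:ℝ) < 1 / ε)]
    exact mul_le_mul_of_nonneg_left (hKbd _) (by positivity)
  have hgXm : Measurable (fun ω => g (X ω)) := hg.comp hX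
  -- the four density functions
  set fp : Ω → ℝ≥0 := fun ω => (f (X ω)).toNNReal with hfp
  set fm : Ω → ℝ≥0 := fun ω => (-(f (X ω))).toNNReal with hfm
  set hp : ℝ → ℝ≥0 := fun t => (h t).toNNReal with hhp
  set hm : ℝ → ℝ≥0 := fun t => (-(h t)).toNNReal with hhm
  have hfpm : Measurable fp := (hf.comp hX).real_toNNReal
  have hfmm : Measurable fm := (hf.comp hX).neg.real_toNNReal
  have hhpm : AEMeasurable hp (volume : Measure ℝ) := hh.aemeasurable.real_toNNReal
  have hhmm : AEMeasurable hm (volume : Measure ℝ) := hh.aemeasurable.neg.real_toNNReal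
  have key_le : ∀ x : ℝ, ((x.toNNReal : ℝ≥0) : ℝ≥0∞) ≤ (‖x‖₊ : ℝ≥0∞) := by
    intro x
    rw [← ENNReal.ofReal_coe_nnreal (p := ‖x‖₊), coe_nnnorm, Real.norm_eq_abs]
    exact ENNReal.ofReal_le_ofReal (le_abs_self x)
  -- the four measures
  set μp : Measure ℝ := (P.withDensity (fun ω => (fp ω : ℝ≥0∞))).map (fun ω => g (X ω)) with hμp
  set μm : Measure ℝ := (P.withDensity (fun ω => (fm ω : ℝ≥0∞))).map (fun ω => g (X ω)) with hμm
  set νp : Measure ℝ := volume.withDensity (fun t => (hp t : ℝ≥0∞)) with hνp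
  set νm : Measure ℝ := volume.withDensity (fun t => (hm t : ℝ≥0∞)) with hνm
  have hfp_fin : ∫⁻ ω, (fp ω : ℝ≥0∞) ∂P ≠ ∞ :=
    ne_of_lt (lt_of_le_of_lt (lintegral_mono fun ω => key_le _) hfX.2)
  have hfm_fin : ∫⁻ ω, (fm ω : ℝ≥0∞) ∂P ≠ ∞ := by
    refine ne_of_lt (lt_of_le_of_lt (lintegral_mono fun ω => ?_) hfX.2)
    simpa [hfm, nnnorm_neg] using key_le (-(f (X ω)))
  have hhp_fin : ∫⁻ t, (hp t : ℝ≥0∞) ∂(volume : Measure ℝ) ≠ ∞ :=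
    ne_of_lt (lt_of_le_of_lt (lintegral_mono fun t => key_le _) hh.2)
  have hhm_fin : ∫⁻ t, (hm t : ℝ≥0∞) ∂(volume : Measure ℝ) ≠ ∞ := by
    refine ne_of_lt (lt_of_le_of_lt (lintegral_mono fun t => ?_) hh.2)
    simpa [hhm, nnnorm_neg] using key_le (-(h t))
  haveI : IsFiniteMeasure (P.withDensity (fun ω => (fp ω : ℝ≥0∞))) :=
    isFiniteMeasure_withDensity hfp_fin
  haveI : IsFiniteMeasure (P.withDensity (fun ω => (fm ω : ℝ≥0∞))) :=
    isFiniteMeasure_withDensity hfm_fin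
  haveI : IsFiniteMeasure νp := isFiniteMeasure_withDensity hhp_fin
  haveI : IsFiniteMeasure νm := isFiniteMeasure_withDensity hhm_fin
  haveI : IsFiniteMeasure μp := by
    refine ⟨?_⟩
    rw [hμp, Measure.map_apply hgXm MeasurableSet.univ]
    exact measure_lt_top _ _
  haveI : IsFiniteMeasure μm := by
    refine ⟨?_⟩
    rw [hμm, Measure.map_apply hgXm MeasurableSet.univ]
    exact measure_lt_top _ _
  -- the key measure identity
  have key : ∀ S : Set ℝ, MeasurableSet S → μp S + νm S = νp S + μm S := by
    intro S hS
    have hA : MeasurableSet ((fun ω => g (X ω)) ⁻¹' S) := hgXm hS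
    have h1 : μp S = ∫⁻ a in (fun ω => g (X ω)) ⁻¹' S, ENNReal.ofReal (f (X a)) ∂P := by
      rw [hμp, Measure.map_apply hgXm hS, withDensity_apply _ hA]; rfl
    have h2 : μm S = ∫⁻ a in (fun ω => g (X ω)) ⁻¹' S, ENNReal.ofReal (-f (X a)) ∂P := by
      rw [hμm, Measure.map_apply hgXm hS, withDensity_apply _ hA]; rfl
    have h3 : νp S = ∫⁻ t in S, ENNReal.ofReal (h t) := by
      rw [hνp, withDensity_apply _ hS]; rfl
    have h4 : νm S = ∫⁻ t in S, ENNReal.ofReal (-h t) := by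
      rw [hνm, withDensity_apply _ hS]; rfl
    have e1 : ∫ ω, f (X ω) * S.indicator (fun _ => (1:ℝ)) (g (X ω)) ∂P
        = (μp S).toReal - (μm S).toReal := by
      have hind : (fun ω => f (X ω) * S.indicator (fun _ => (1:ℝ)) (g (X ω)))
          = ((fun ω => g (X ω)) ⁻¹' S).indicator (fun ω => f (X ω)) := by
        funext ω
        by_cases hω : g (X ω) ∈ S <;>
          simp [Set.indicator, hω]
      rw [hind, integral_indicator hA,
        integral_eq_lintegral_pos_part_sub_lintegral_neg_part hfX.restrict, h1, h2]
    have e2 : ∫ t in S, h t = (νp S).toReal - (νm S).toReal := by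
      rw [integral_eq_lintegral_pos_part_sub_lintegral_neg_part hh.restrict, h3, h4]
    have etr : (μp S).toReal + (νm S).toReal = (νp S).toReal + (μm S).toReal := by
      have := hrep S hS
      rw [e1, e2] at this
      linarith
    have := (ENNReal.toReal_eq_toReal_iff'
        (ENNReal.add_ne_top.2 ⟨measure_ne_top μp S, measure_ne_top νm S⟩)
        (ENNReal.add_ne_top.2 ⟨measure_ne_top νp S, measure_ne_top μm S⟩))
    apply this.mp
    rw [ENNReal.toReal_add (measure_ne_top μp S) (measure_ne_top νm S),
      ENNReal.toReal_add (measure_ne_top νp S) (measure_ne_top μm S)]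
    exact etr
  have meq : μp + νm = νp + μm :=
    Measure.ext fun S hS => by simpa [Measure.add_apply] using key S hS
  -- integrability of φ against finite measures
  have hφint : ∀ (μ : Measure ℝ) [IsFiniteMeasure μ], Integrable φ μ := by
    intro μ _
    exact (integrable_const ((1/ε)*C)).mono' hφmeas.aestronglyMeasurable
      (Filter.Eventually.of_forall hφbd)
  have hμeq : ∫ t, φ t ∂μp + ∫ t, φ t ∂νm = ∫ t, φ t ∂νp + ∫ t, φ t ∂μm := by
    rw [← integral_add_measure (hφint μp) (hφint νm),
      ← integral_add_measure (hφint νp) (hφint μm), meq]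
  -- transfer integrals to P / volume
  have eμp : ∫ t, φ t ∂μp = ∫ ω, (fp ω : ℝ) * φ (g (X ω)) ∂P := by
    rw [hμp, integral_map hgXm.aemeasurable hφmeas.aestronglyMeasurable,
      integral_withDensity_eq_integral_smul hfpm]
    simp [NNReal.smul_def]
  have eμm : ∫ t, φ t ∂μm = ∫ ω, (fm ω : ℝ) * φ (g (X ω)) ∂P := by
    rw [hμm, integral_map hgXm.aemeasurable hφmeas.aestronglyMeasurable,
      integral_withDensity_eq_integral_smul hfmm]
    simp [NNReal.smul_def]
  have eνp : ∫ t, φ t ∂νp = ∫ t, (hp t : ℝ) * φ t := by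
    rw [hνp, integral_withDensity_eq_integral_smul₀ hhpm]
    simp [NNReal.smul_def]
  have eνm : ∫ t, φ t ∂νm = ∫ t, (hm t : ℝ) * φ t := by
    rw [hνm, integral_withDensity_eq_integral_smul₀ hhmm]
    simp [NNReal.smul_def]
  -- integrability of the transferred integrands
  have ifp : Integrable (fun ω => (fp ω : ℝ) * φ (g (X ω))) P := by
    have h0 : Integrable (φ ∘ fun ω => g (X ω)) (P.withDensity (fun ω => (fp ω : ℝ≥0∞))) :=
      (integrable_map_measure hφmeas.aestronglyMeasurable hgXm.aemeasurable).1 (hφint μp)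
    have := (integrable_withDensity_iff_integrable_smul hfpm).1 h0
    simpa [NNReal.smul_def, Function.comp] using this
  have ifm : Integrable (fun ω => (fm ω : ℝ) * φ (g (X ω))) P := by
    have h0 : Integrable (φ ∘ fun ω => g (X ω)) (P.withDensity (fun ω => (fm ω : ℝ≥0∞))) :=
      (integrable_map_measure hφmeas.aestronglyMeasurable hgXm.aemeasurable).1 (hφint μm)
    have := (integrable_withDensity_iff_integrable_smul hfmm).1 h0
    simpa [NNReal.smul_def, Function.comp] using this
  have ihp : Integrable (fun t => (hp t : ℝ) * φ t) (volume : Measure ℝ) := by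
    have := (integrable_withDensity_iff_integrable_smul₀ hhpm).1 (hφint νp)
    simpa [NNReal.smul_def] using this
  have ihm : Integrable (fun t => (hm t : ℝ) * φ t) (volume : Measure ℝ) := by
    have := (integrable_withDensity_iff_integrable_smul₀ hhmm).1 (hφint νm)
    simpa [NNReal.smul_def] using this
  -- rewrite the two sides
  have hsubf : ∀ ω, (fp ω : ℝ) - (fm ω : ℝ) = f (X ω) := by
    intro ω
    simp only [hfp, hfm, Real.coe_toNNReal']
    exact max_zero_sub_max_neg_zero_eq_self _
  have hsubh : ∀ t, (hp t : ℝ) - (hm t : ℝ) = h t := by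
    intro t
    simp only [hhp, hhm, Real.coe_toNNReal']
    exact max_zero_sub_max_neg_zero_eq_self _
  have hL : ∫ ω, (1 / ε) * f (X ω) * K ((g (X ω) - θ) / ε) ∂P
      = ∫ t, φ t ∂μp - ∫ t, φ t ∂μm := by
    rw [eμp, eμm, ← integral_sub ifp ifm]
    refine integral_congr_ae (Filter.Eventually.of_forall fun ω => ?_)
    have hk : K ((g (X ω) - θ) / ε) = K ((θ - g (X ω)) / ε) := by
      rw [show (θ - g (X ω)) / ε = -((g (X ω) - θ) / ε) by ring, hKsymm]
    have : (1 / ε) * f (X ω) * K ((g (X ω) - θ) / ε) = f (X ω) * φ (g (X ω)) := by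
      rw [hk, hφdef]; ring
    beta_reduce
    rw [this, ← hsubf ω]; ring
  have hR : ∫ t, h t * φ t = ∫ t, φ t ∂νp - ∫ t, φ t ∂νm := by
    rw [eνp, eνm, ← integral_sub ihp ihm]
    refine integral_congr_ae (Filter.Eventually.of_forall fun t => ?_)
    beta_reduce
    rw [← hsubh t]; ring
  rw [hL, hR]
  linarith [hμeq]
end

section
/- Let (Ω, P) be a probability space, X : Ω → ℝⁿ a random vector, g : ℝⁿ → ℝ Borel measurable, and f : ℝⁿ → ℝ Borel measurable with f(X) integrable. Let K : ℝ → ℝ be Borel measurable, bounded, symmetric (K(−z) = K(z)), non-negative, with ∫_ℝ K(z) dz = 1. Suppose there exists a bounded Lebesgue-integrable h : ℝ → ℝ, continuous at θ ∈ ℝ, such that for every Borel set S ⊆ ℝ, E[f(X)·1{g(X) ∈ S}] = ∫_S h(t) dt. Then lim_{ε → 0⁺} E[(1/ε)·f(X)·K((g(X) − θ)/ε)] = h(θ). -/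
open MeasureTheory Filter

/-- Extension of the density representation from indicator test functions to
bounded measurable test functions. -/
lemma lint_lt_top {α : Type*} [MeasurableSpace α] (μ : Measure α) (G : α → ℝ)
    (hG : Integrable G μ) : (∫⁻ x, ((G x).toNNReal : ENNReal) ∂μ) < ⊤ :=
  lt_of_le_of_lt (lintegral_mono fun x => Real.ofReal_le_enorm _) hG.2

lemma rep_ext {Ω : Type*} [MeasurableSpace Ω] (P : Measure Ω) [IsFiniteMeasure P]
    (F : Ω → ℝ) (hFm : Measurable F) (hFi : Integrable F P)
    (Y : Ω → ℝ) (hY : Measurable Y)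
    (h : ℝ → ℝ) (hh : Integrable h)
    (hrep : ∀ S : Set ℝ, MeasurableSet S →
      ∫ ω, F ω * S.indicator (fun _ => (1 : ℝ)) (Y ω) ∂P = ∫ t in S, h t)
    (φ : ℝ → ℝ) (hφ : Measurable φ) (B : ℝ) (hφb : ∀ t, |φ t| ≤ B) :
    ∫ ω, F ω * φ (Y ω) ∂P = ∫ t, φ t * h t := by
  have haeh : AEMeasurable h (volume : Measure ℝ) := hh.aemeasurable
  set μp : Measure ℝ := (P.withDensity (fun ω => ((F ω).toNNReal : ENNReal))).map Y with hμp
  set μm : Measure ℝ := (P.withDensity (fun ω => ((-F ω).toNNReal : ENNReal))).map Y with hμm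
  set νp : Measure ℝ := volume.withDensity (fun t => ((h t).toNNReal : ENNReal)) with hνp
  set νm : Measure ℝ := volume.withDensity (fun t => ((-h t).toNNReal : ENNReal)) with hνm
  have hFp : Measurable fun ω => (F ω).toNNReal := hFm.real_toNNReal
  have hFmn : Measurable fun ω => (-F ω).toNNReal := hFm.neg.real_toNNReal
  -- finiteness
  haveI : IsFiniteMeasure μp := by
    constructor
    rw [hμp, Measure.map_apply hY MeasurableSet.univ, Set.preimage_univ,
      withDensity_apply _ MeasurableSet.univ, Measure.restrict_univ]
    exact lint_lt_top P F hFi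
  haveI : IsFiniteMeasure μm := by
    constructor
    rw [hμm, Measure.map_apply hY MeasurableSet.univ, Set.preimage_univ,
      withDensity_apply _ MeasurableSet.univ, Measure.restrict_univ]
    exact lint_lt_top P (fun ω => -F ω) hFi.neg
  haveI : IsFiniteMeasure νp := by
    constructor
    rw [hνp, withDensity_apply _ MeasurableSet.univ, Measure.restrict_univ]
    exact lint_lt_top volume h hh
  haveI : IsFiniteMeasure νm := by
    constructor
    rw [hνm, withDensity_apply _ MeasurableSet.univ, Measure.restrict_univ]
    exact lint_lt_top volume (fun t => -h t) hh.neg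
  -- measure equality
  have Heq : μp + νm = μm + νp := by
    ext S hS
    have h1 : ∫ ω in Y ⁻¹' S, F ω ∂P
        = (μp S).toReal - (μm S).toReal := by
      rw [integral_eq_lintegral_pos_part_sub_lintegral_neg_part hFi.restrict]
      congr 1
      · congr 1
        rw [hμp, Measure.map_apply hY hS, withDensity_apply _ (hY hS)]
        rfl
      · congr 1
        rw [hμm, Measure.map_apply hY hS, withDensity_apply _ (hY hS)]
        rfl
    have h2 : ∫ t in S, h t = (νp S).toReal - (νm S).toReal := by
      rw [integral_eq_lintegral_pos_part_sub_lintegral_neg_part hh.restrict]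
      congr 1
      · congr 1
        rw [hνp, withDensity_apply _ hS]
        rfl
      · congr 1
        rw [hνm, withDensity_apply _ hS]
        rfl
    have h3 : ∫ ω, F ω * S.indicator (fun _ => (1 : ℝ)) (Y ω) ∂P
        = ∫ ω in Y ⁻¹' S, F ω ∂P := by
      rw [← integral_indicator (hY hS)]
      congr 1 with ω
      by_cases hω : Y ω ∈ S <;> simp [Set.indicator, hω]
    have h4 := hrep S hS
    rw [h3, h1, h2] at h4
    have e1 : ((μp + νm) S).toReal = ((μm + νp) S).toReal := by
      simp only [Measure.add_apply, ENNReal.toReal_add (measure_ne_top _ _) (measure_ne_top _ _)]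
      linarith
    exact (ENNReal.toReal_eq_toReal_iff' (by simp [measure_ne_top]) (by simp [measure_ne_top])).mp e1
  -- integrability of φ against finite measures
  have intφ : ∀ (μ : Measure ℝ) [IsFiniteMeasure μ], Integrable φ μ := by
    intro μ _
    refine Integrable.mono' (integrable_const B) hφ.aestronglyMeasurable ?_
    exact Eventually.of_forall fun t => by simpa [Real.norm_eq_abs] using hφb t
  have HI : ∫ t, φ t ∂μp + ∫ t, φ t ∂νm = ∫ t, φ t ∂μm + ∫ t, φ t ∂νp := by
    have := congrArg (fun μ => ∫ t, φ t ∂μ) Heq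
    simpa [integral_add_measure (intφ _) (intφ _)] using this
  -- compute the μ-integrals
  have hμpc : ∫ t, φ t ∂μp = ∫ ω, max (F ω) 0 * φ (Y ω) ∂P := by
    rw [hμp, integral_map hY.aemeasurable hφ.aestronglyMeasurable,
      integral_withDensity_eq_integral_smul hFp]
    simp only [NNReal.smul_def, Real.coe_toNNReal', smul_eq_mul, max_def]
  have hμmc : ∫ t, φ t ∂μm = ∫ ω, max (-F ω) 0 * φ (Y ω) ∂P := by
    rw [hμm, integral_map hY.aemeasurable hφ.aestronglyMeasurable,
      integral_withDensity_eq_integral_smul hFmn]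
    simp only [NNReal.smul_def, Real.coe_toNNReal', smul_eq_mul]
  have haeh' : AEMeasurable (fun t => (h t).toNNReal) (volume : Measure ℝ) :=
    measurable_real_toNNReal.comp_aemeasurable haeh
  have haeh'' : AEMeasurable (fun t => (-h t).toNNReal) (volume : Measure ℝ) :=
    measurable_real_toNNReal.comp_aemeasurable haeh.neg
  have hνpc : ∫ t, φ t ∂νp = ∫ t, max (h t) 0 * φ t := by
    rw [hνp, integral_withDensity_eq_integral_smul₀ haeh']
    simp only [NNReal.smul_def, Real.coe_toNNReal', smul_eq_mul]
  have hνmc : ∫ t, φ t ∂νm = ∫ t, max (-h t) 0 * φ t := by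
    rw [hνm, integral_withDensity_eq_integral_smul₀ haeh'']
    simp only [NNReal.smul_def, Real.coe_toNNReal', smul_eq_mul]
  rw [hμpc, hμmc, hνpc, hνmc] at HI
  -- integrability of the pieces
  have hB : 0 ≤ B := le_trans (abs_nonneg _) (hφb 0)
  have Ip : Integrable (fun ω => max (F ω) 0 * φ (Y ω)) P := by
    refine Integrable.mono' (hFi.abs.const_mul B) ((hFm.max measurable_const).mul (hφ.comp hY)).aestronglyMeasurable (Eventually.of_forall fun ω => ?_)
    rw [Real.norm_eq_abs, abs_mul]
    have h1 : |max (F ω) 0| ≤ |F ω| := by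
      rcases le_or_gt (F ω) 0 with hc | hc
      · simp [max_eq_right hc]
      · simp [max_eq_left hc.le]
    calc |max (F ω) 0| * |φ (Y ω)| ≤ |F ω| * B :=
          mul_le_mul h1 (hφb _) (abs_nonneg _) (abs_nonneg _)
      _ = B * |F ω| := mul_comm _ _
  have Im : Integrable (fun ω => max (-F ω) 0 * φ (Y ω)) P := by
    refine Integrable.mono' (hFi.abs.const_mul B) ((hFm.neg.max measurable_const).mul (hφ.comp hY)).aestronglyMeasurable (Eventually.of_forall fun ω => ?_)
    rw [Real.norm_eq_abs, abs_mul]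
    have h1 : |max (-F ω) 0| ≤ |F ω| := by
      rcases le_or_gt (-F ω) 0 with hc | hc
      · simp [max_eq_right hc]
      · rw [max_eq_left hc.le, abs_neg]
    calc |max (-F ω) 0| * |φ (Y ω)| ≤ |F ω| * B :=
          mul_le_mul h1 (hφb _) (abs_nonneg _) (abs_nonneg _)
      _ = B * |F ω| := mul_comm _ _
  have Jp : Integrable (fun t => max (h t) 0 * φ t) volume := by
    refine Integrable.mono' (hh.abs.const_mul B) ((hh.1.sup aestronglyMeasurable_const).mul hφ.aestronglyMeasurable) (Eventually.of_forall fun t => ?_)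
    rw [Real.norm_eq_abs, abs_mul]
    have h1 : |max (h t) 0| ≤ |h t| := by
      rcases le_or_gt (h t) 0 with hc | hc
      · simp [max_eq_right hc]
      · simp [max_eq_left hc.le]
    calc |max (h t) 0| * |φ t| ≤ |h t| * B :=
          mul_le_mul h1 (hφb _) (abs_nonneg _) (abs_nonneg _)
      _ = B * |h t| := mul_comm _ _
  have Jm : Integrable (fun t => max (-h t) 0 * φ t) volume := by
    refine Integrable.mono' (hh.abs.const_mul B) ((hh.1.neg.sup aestronglyMeasurable_const).mul hφ.aestronglyMeasurable) (Eventually.of_forall fun t => ?_)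
    rw [Real.norm_eq_abs, abs_mul]
    have h1 : |max (-h t) 0| ≤ |h t| := by
      rcases le_or_gt (-h t) 0 with hc | hc
      · simp [max_eq_right hc]
      · rw [max_eq_left hc.le, abs_neg]
    calc |max (-h t) 0| * |φ t| ≤ |h t| * B :=
          mul_le_mul h1 (hφb _) (abs_nonneg _) (abs_nonneg _)
      _ = B * |h t| := mul_comm _ _
  have E1 : ∫ ω, F ω * φ (Y ω) ∂P
      = ∫ ω, max (F ω) 0 * φ (Y ω) ∂P - ∫ ω, max (-F ω) 0 * φ (Y ω) ∂P := by
    rw [← integral_sub Ip Im]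
    congr 1 with ω
    rw [← sub_mul, max_zero_sub_max_neg_zero_eq_self]
  have E2 : (∫ t, max (h t) 0 * φ t) - ∫ t, max (-h t) 0 * φ t
      = ∫ t, φ t * h t := by
    rw [← integral_sub Jp Jm]
    congr 1 with t
    rw [← sub_mul, max_zero_sub_max_neg_zero_eq_self, mul_comm]
  rw [E1, ← E2]
  linarith

/-- Approximate-identity limit: `∫ K u * h (θ + ε u) du → h θ` as `ε → 0⁺`. -/
lemma peak_limit (K : ℝ → ℝ) (hK : Measurable K) (hK0 : ∀ z, 0 ≤ K z)
    (hK1 : ∫ z, K z = 1) (h : ℝ → ℝ) (hh : Integrable h) (Ch : ℝ)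
    (hhbd : ∀ t, |h t| ≤ Ch) (θ : ℝ) (hcont : ContinuousAt h θ) :
    Tendsto (fun ε : ℝ => ∫ u, K u * h (θ + ε * u))
      (nhdsWithin 0 (Set.Ioi 0)) (nhds (h θ)) := by
  have KInt : Integrable K (volume : Measure ℝ) := integrable_of_integral_eq_one hK1
  have Ch0 : 0 ≤ Ch := le_trans (abs_nonneg _) (hhbd θ)
  rw [Metric.tendsto_nhdsWithin_nhds]
  intro δ hδ
  set τ : ℝ := δ / (2 * (2 * Ch + 1)) with hτdef
  have hτ : 0 < τ := by positivity
  have hball : Tendsto (fun R : ℝ => ∫ u in Metric.closedBall (0:ℝ) R, K u) atTop (nhds 1) := by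
    rw [← hK1]
    exact (MeasureTheory.aecover_closedBall tendsto_id).integral_tendsto_of_countably_generated KInt
  have htail : Tendsto (fun R : ℝ => ∫ u in (Metric.closedBall (0:ℝ) R)ᶜ, K u) atTop (nhds 0) := by
    have : (fun R : ℝ => ∫ u in (Metric.closedBall (0:ℝ) R)ᶜ, K u)
        = fun R => (∫ u, K u) - ∫ u in Metric.closedBall (0:ℝ) R, K u := by
      funext R
      have := integral_add_compl (measurableSet_closedBall (x := (0:ℝ)) (ε := R)) KInt
      linarith
    rw [this, hK1]
    simpa using (tendsto_const_nhds (x := (1:ℝ))).sub hball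
  obtain ⟨R, hRτ, hR1⟩ := ((htail.eventually (gt_mem_nhds hτ)).and (eventually_ge_atTop (1:ℝ))).exists
  have hRpos : (0:ℝ) < R := lt_of_lt_of_le zero_lt_one hR1
  obtain ⟨η, hηpos, hηc⟩ := Metric.continuousAt_iff.mp hcont (δ/4) (by positivity)
  refine ⟨η / R, by positivity, ?_⟩
  intro ε hεIoi hεdist
  have hε : (0:ℝ) < ε := hεIoi
  have hεR : ε * R < η := by
    rw [Real.dist_eq, sub_zero, abs_of_pos hε] at hεdist
    calc ε * R < (η / R) * R := by exact mul_lt_mul_of_pos_right hεdist hRpos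
      _ = η := div_mul_cancel₀ _ hRpos.ne'
  -- measurability of the translated-dilated function
  have qmp : Measure.QuasiMeasurePreserving (fun u : ℝ => θ + ε * u) volume volume := by
    have q1 : Measure.QuasiMeasurePreserving (fun u : ℝ => ε * u) volume volume := by
      refine ⟨measurable_const_mul ε, ?_⟩
      rw [Real.map_volume_mul_left hε.ne']
      exact Measure.AbsolutelyContinuous.rfl.smul_left _
    have q2 := (measurePreserving_add_left (volume : Measure ℝ) θ).quasiMeasurePreserving
    exact q2.comp q1
  have hAESM : AEStronglyMeasurable (fun u : ℝ => h (θ + ε * u)) volume :=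
    hh.1.comp_quasiMeasurePreserving qmp
  have IKh : Integrable (fun u : ℝ => K u * h (θ + ε * u)) volume := by
    refine Integrable.mono' (KInt.const_mul Ch) (hK.aestronglyMeasurable.mul hAESM)
      (Eventually.of_forall fun u => ?_)
    rw [Real.norm_eq_abs, abs_mul, abs_of_nonneg (hK0 u)]
    calc K u * |h (θ + ε * u)| ≤ K u * Ch :=
          mul_le_mul_of_nonneg_left (hhbd _) (hK0 u)
      _ = Ch * K u := mul_comm _ _
  set D : ℝ → ℝ := fun u => K u * (h (θ + ε * u) - h θ) with hD
  have ID : Integrable D volume := by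
    have := IKh.sub (KInt.mul_const (h θ))
    refine this.congr (Eventually.of_forall fun u => ?_)
    simp [hD, mul_sub]
  have key : (∫ u, K u * h (θ + ε * u)) - h θ = ∫ u, D u := by
    have h1 : ∫ u, D u = (∫ u, K u * h (θ + ε * u)) - ∫ u, K u * h θ := by
      rw [← integral_sub IKh (KInt.mul_const (h θ))]
      congr 1 with u
      simp [hD, mul_sub]
    have h2 : ∫ u, K u * h θ = h θ := by
      rw [integral_mul_const, hK1, one_mul]
    rw [h1, h2]
  rw [Real.dist_eq, key]
  -- split the integral
  have hsplit : ∫ u, ‖D u‖ =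
      (∫ u in Metric.closedBall (0:ℝ) R, ‖D u‖) + ∫ u in (Metric.closedBall (0:ℝ) R)ᶜ, ‖D u‖ :=
    (integral_add_compl (measurableSet_closedBall) ID.norm).symm
  have inner : (∫ u in Metric.closedBall (0:ℝ) R, ‖D u‖) ≤ δ/4 := by
    have step : (∫ u in Metric.closedBall (0:ℝ) R, ‖D u‖)
        ≤ ∫ u in Metric.closedBall (0:ℝ) R, (δ/4) * K u := by
      refine setIntegral_mono_on ID.norm.integrableOn
        ((KInt.const_mul (δ/4)).integrableOn) measurableSet_closedBall (fun u hu => ?_)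
      have habs : |u| ≤ R := by
        rw [Metric.mem_closedBall, Real.dist_eq, sub_zero] at hu
        exact hu
      have hd : dist (θ + ε * u) θ < η := by
        rw [Real.dist_eq, add_sub_cancel_left, abs_mul, abs_of_pos hε]
        calc ε * |u| ≤ ε * R := mul_le_mul_of_nonneg_left habs hε.le
          _ < η := hεR
      have hΔ : |h (θ + ε * u) - h θ| < δ/4 := by
        have := hηc hd
        rwa [Real.dist_eq] at this
      rw [Real.norm_eq_abs, hD, abs_mul, abs_of_nonneg (hK0 u)]
      calc K u * |h (θ + ε * u) - h θ| ≤ K u * (δ/4) :=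
            mul_le_mul_of_nonneg_left hΔ.le (hK0 u)
        _ = (δ/4) * K u := mul_comm _ _
    have step2 : (∫ u in Metric.closedBall (0:ℝ) R, (δ/4) * K u) ≤ δ/4 := by
      rw [integral_const_mul]
      have : (∫ u in Metric.closedBall (0:ℝ) R, K u) ≤ ∫ u, K u :=
        setIntegral_le_integral KInt (Eventually.of_forall fun u => hK0 u)
      rw [hK1] at this
      nlinarith
    linarith
  have outer : (∫ u in (Metric.closedBall (0:ℝ) R)ᶜ, ‖D u‖) ≤ δ/2 := by
    have step : (∫ u in (Metric.closedBall (0:ℝ) R)ᶜ, ‖D u‖)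
        ≤ ∫ u in (Metric.closedBall (0:ℝ) R)ᶜ, (2*Ch) * K u := by
      refine setIntegral_mono_on ID.norm.integrableOn
        ((KInt.const_mul (2*Ch)).integrableOn) measurableSet_closedBall.compl (fun u _ => ?_)
      rw [Real.norm_eq_abs, hD, abs_mul, abs_of_nonneg (hK0 u)]
      have hΔ : |h (θ + ε * u) - h θ| ≤ 2 * Ch := by
        calc |h (θ + ε * u) - h θ| ≤ |h (θ + ε * u)| + |h θ| := abs_sub _ _
          _ ≤ Ch + Ch := add_le_add (hhbd _) (hhbd _)
          _ = 2 * Ch := by ring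
      calc K u * |h (θ + ε * u) - h θ| ≤ K u * (2*Ch) :=
            mul_le_mul_of_nonneg_left hΔ (hK0 u)
        _ = (2*Ch) * K u := mul_comm _ _
    have step2 : (∫ u in (Metric.closedBall (0:ℝ) R)ᶜ, (2*Ch) * K u) ≤ δ/2 := by
      rw [integral_const_mul]
      have htp : (∫ u in (Metric.closedBall (0:ℝ) R)ᶜ, K u) < τ := hRτ
      have htn : (0:ℝ) ≤ ∫ u in (Metric.closedBall (0:ℝ) R)ᶜ, K u :=
        setIntegral_nonneg measurableSet_closedBall.compl (fun u _ => hK0 u)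
      have hτd : τ * (2 * (2 * Ch + 1)) = δ := div_mul_cancel₀ _ (by positivity)
      nlinarith
    linarith
  calc |∫ u, D u| ≤ ∫ u, ‖D u‖ := by
        simpa [Real.norm_eq_abs] using norm_integral_le_integral_norm D
    _ ≤ δ/4 + δ/2 := by rw [hsplit]; exact add_le_add inner outer
    _ < δ := by linarith

/-- Asymptotic unbiasedness of the STE pseudo-gradient: as the bandwidth `ε → 0⁺`,
the expectation `E[(1/ε)·f(X)·K((g(X) − θ)/ε)]` converges to `h θ`, the density of
the signed measure `S ↦ E[f(X)·1{g(X) ∈ S}]` at its continuity point `θ`. -/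
theorem stmt_9 {n : ℕ} {Ω : Type*} [MeasurableSpace Ω]
    (P : Measure Ω) [IsProbabilityMeasure P]
    (X : Ω → EuclideanSpace ℝ (Fin n)) (hX : Measurable X)
    (g : EuclideanSpace ℝ (Fin n) → ℝ) (hg : Measurable g)
    (f : EuclideanSpace ℝ (Fin n) → ℝ) (hf : Measurable f)
    (hfX : Integrable (fun ω => f (X ω)) P)
    (K : ℝ → ℝ) (hK : Measurable K) (C : ℝ) (hKbd : ∀ z, |K z| ≤ C)
    (hKsymm : ∀ z : ℝ, K (-z) = K z) (hK0 : ∀ z, 0 ≤ K z)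
    (hK1 : ∫ z, K z = 1)
    (θ : ℝ)
    (h : ℝ → ℝ) (hh : Integrable h) (Ch : ℝ) (hhbd : ∀ t, |h t| ≤ Ch)
    (hcont : ContinuousAt h θ)
    (hrep : ∀ S : Set ℝ, MeasurableSet S →
      ∫ ω, f (X ω) * S.indicator (fun _ => (1 : ℝ)) (g (X ω)) ∂P = ∫ t in S, h t) :
    Tendsto (fun ε : ℝ => ∫ ω, (1 / ε) * f (X ω) * K ((g (X ω) - θ) / ε) ∂P)
      (nhdsWithin 0 (Set.Ioi 0)) (nhds (h θ)) := by
  have hY : Measurable fun ω => g (X ω) := hg.comp hX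
  have main := peak_limit K hK hK0 hK1 h hh Ch hhbd θ hcont
  refine main.congr' ?_
  filter_upwards [self_mem_nhdsWithin] with ε hεIoi
  have hε : (0:ℝ) < ε := hεIoi
  set φε : ℝ → ℝ := fun t => (1 / ε) * K ((t - θ) / ε) with hφεdef
  have hφεm : Measurable φε :=
    ((hK.comp ((measurable_id.sub_const θ).div_const ε)).const_mul (1/ε))
  have hφεb : ∀ t, |φε t| ≤ |1/ε| * C := by
    intro t
    rw [hφεdef]
    calc |1 / ε * K ((t - θ) / ε)| = |1/ε| * |K ((t - θ) / ε)| := abs_mul _ _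
      _ ≤ |1/ε| * C := mul_le_mul_of_nonneg_left (hKbd _) (abs_nonneg _)
  have repε := rep_ext P (fun ω => f (X ω)) (hf.comp hX) hfX (fun ω => g (X ω)) hY h hh
    hrep φε hφεm (|1/ε| * C) hφεb
  set Fn : ℝ → ℝ := fun t => φε t * h t with hFn
  have hcv : ∫ u, Fn (ε * u + θ) = |ε⁻¹| • ∫ t, Fn t := by
    have h1 := Measure.integral_comp_mul_left (fun x => Fn (x + θ)) ε
    have h2 : ∫ y, Fn (y + θ) = ∫ t, Fn t :=
      MeasureTheory.integral_add_right_eq_self Fn θ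
    rw [h2] at h1
    exact h1
  have e1 : ∀ u, Fn (ε * u + θ) = (1/ε) * (K u * h (θ + ε * u)) := by
    intro u
    have harg : (ε * u + θ - θ) / ε = u := by
      rw [add_sub_cancel_right, mul_div_cancel_left₀ _ hε.ne']
    simp only [hFn, hφεdef, harg, add_comm θ (ε * u)]
    ring
  calc ∫ u, K u * h (θ + ε * u)
      = ∫ u, ε * Fn (ε * u + θ) := by
        congr 1 with u
        rw [e1]
        field_simp
    _ = ε * ∫ u, Fn (ε * u + θ) := integral_const_mul _ _
    _ = ε * (|ε⁻¹| • ∫ t, Fn t) := by rw [hcv]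
    _ = ∫ t, Fn t := by
        rw [smul_eq_mul, abs_of_pos (inv_pos.mpr hε), ← mul_assoc,
          mul_inv_cancel₀ hε.ne', one_mul]
    _ = ∫ ω, f (X ω) * φε (g (X ω)) ∂P := repε.symm
    _ = ∫ ω, (1 / ε) * f (X ω) * K ((g (X ω) - θ) / ε) ∂P := by
        congr 1 with ω
        rw [hφεdef]
        ring
end

section
/- Fix n, M ∈ ℕ, an M×n real matrix W with rows w_1,…,w_M ∈ ℝⁿ, vectors b_gate, b_mag, r ∈ ℝ^M, and an index i ∈ {1,…,M}. Define the weight-tied Gated SAE feature f_i(x) := 1{⟨w_i, x⟩ + b_gate,i > 0} · max(e^{r_i}·⟨w_i, x⟩ + b_mag,i, 0) for x ∈ ℝⁿ, and set π̃_i(x) := e^{r_i}·⟨w_i, x⟩ + b_mag,i and θ_i := b_mag,i − e^{r_i}·b_gate,i. If θ_i > 0, then for every x ∈ ℝⁿ, f_i(x) = π̃_i(x)·1{π̃_i(x) > θ_i}; that is, the weight-tied Gated SAE feature equals the JumpReLU activation with threshold θ_i applied to the pre-activation π̃_i(x). -/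
/-- With weight tying, a Gated SAE feature equals the JumpReLU activation with
threshold `θ_i = b_mag,i − e^{r_i} b_gate,i` applied to the magnitude pre-activation
`π̃_i(x) = e^{r_i}⟨w_i, x⟩ + b_mag,i`, provided `θ_i > 0`. -/
theorem stmt_14 {n M : ℕ}
    (w : Fin M → EuclideanSpace ℝ (Fin n))
    (bgate bmag r : Fin M → ℝ) (i : Fin M)
    (f : EuclideanSpace ℝ (Fin n) → ℝ)
    (hf : ∀ x, f x = (if 0 < (inner ℝ (w i) x : ℝ) + bgate i then (1 : ℝ) else 0)
        * max (Real.exp (r i) * (inner ℝ (w i) x : ℝ) + bmag i) 0)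
    (θ : ℝ) (hθdef : θ = bmag i - Real.exp (r i) * bgate i) (hθ : 0 < θ)
    (π : EuclideanSpace ℝ (Fin n) → ℝ)
    (hπ : ∀ x, π x = Real.exp (r i) * (inner ℝ (w i) x : ℝ) + bmag i)
    (x : EuclideanSpace ℝ (Fin n)) :
    f x = π x * (if θ < π x then (1 : ℝ) else 0) := by
  have he : 0 < Real.exp (r i) := Real.exp_pos _
  set a : ℝ := (inner ℝ (w i) x : ℝ)
  have hgate : (0 < a + bgate i) ↔ θ < π x := by
    rw [hπ, hθdef]
    constructor
    · intro h
      nlinarith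
    · intro h
      nlinarith
  rw [hf]
  rw [hπ x] at hgate ⊢
  by_cases h : 0 < a + bgate i
  · rw [if_pos h, if_pos (hgate.mp h), one_mul, mul_one]
    have hpos : 0 < Real.exp (r i) * a + bmag i := by
      have := hgate.mp h; linarith
    exact max_eq_left hpos.le
  · rw [if_neg h, if_neg (fun hc => h (hgate.mpr hc)), zero_mul, mul_zero]
end
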